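/- Let R be a ring, π a group, and suppose given: a homomorphism-like family φ_k: π → π with permutation data σ (coming from a homomorphism Φ: π → π^n ⋊ Σ_n), square matrices D over the group ring ℤπ (for ∂) and matrices H_k over ℤπ (for the chain homotopies), where the k-th twisted composition satisfies tr(H_k ∘ ∂) = Σ_{i,l} φ_k(d^{il}) h^{li}_{σ_{d^{il}}⁻¹(k)} and tr(∂ ∘ H_k) = Σ_{i,l} h_k^{li} d^{il} (for group elements d^{il}, h_k^{li} ∈ π with integer coefficients). Then, applying the quotient map ρ to Reidemeister classes in ℤ(π × {1,…,n}) → ℤR(Φ), one has Σ_{k=1}^n ρ(tr(H_k ∘ ∂) × {k}) = Σ_{k=1}^n ρ(tr(∂ ∘ H_k) × {k}). -/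

import Mathlib

/-- The action of the symmetric group `Σ_n` on `π^n` by permuting coordinates:
`σ · (β_1,…,β_n) = (β_{σ⁻¹(1)},…,β_{σ⁻¹(n)})`. -/
def permAut (π : Type*) [Group π] (n : ℕ) : Equiv.Perm (Fin n) →* MulAut (Fin n → π) where
  toFun σ :=
    { toFun := fun β => β ∘ σ.symm
      invFun := fun β => β ∘ σ
      left_inv := fun β => by funext k; simp
      right_inv := fun β => by funext k; simp
      map_mul' := fun β γ => rfl }
  map_one' := by ext β k; rfl
  map_mul' := fun σ ρ => by ext β k; show β ((σ * ρ).symm k) = β (ρ.symm (σ.symm k)); rw [Equiv.Perm.mul_def, Equiv.symm_trans_apply]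


/-- The Reidemeister (twisted conjugacy) relation on `π × {1,…,n}` associated to
a homomorphism `Φ : π → π^n ⋊ Σ_n`. -/
def reidRel {π : Type*} [Group π] {n : ℕ}
    (Φ : π →* (Fin n → π) ⋊[permAut π n] Equiv.Perm (Fin n)) :
    π × Fin n → π × Fin n → Prop :=
  fun p q => ∃ γ : π, (Φ γ).right p.2 = q.2 ∧ p.1 = ((Φ γ).left q.2)⁻¹ * q.1 * γ


/-!
For a single matrix entry the identity `(y x, σ_x⁻¹(k)) ∼ (φ_k(x) y, k)` (witnessed by `γ = x`)
matches the summands of `tr(∂ ∘ H_k)` with those of `tr(H_k ∘ ∂)` once the index `k` is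
reindexed by the permutation `σ_x`.
-/

section Reidemeister

variable {π : Type*} [Group π] {n : ℕ}
  (Φ : π →* (Fin n → π) ⋊[permAut π n] Equiv.Perm (Fin n))

theorem reidRel_mul_twisted (x y : π) (k : Fin n) :
    reidRel Φ (y * x, (Φ x).right⁻¹ k) ((Φ x).left k * y, k) :=
  ⟨x, Equiv.apply_symm_apply _ _, by group⟩

theorem sum_single_twisted_eq {R : Type*} [Semiring R] (x : π) (y : Fin n → π) (c : Fin n → R) :
    ∑ k : Fin n, c ((Φ x).right⁻¹ k) •
        Finsupp.single (Quot.mk (reidRel Φ) ((Φ x).left k * y ((Φ x).right⁻¹ k), k)) (1 : R) =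
      ∑ k : Fin n, c k • Finsupp.single (Quot.mk (reidRel Φ) (y k * x, k)) (1 : R) :=
  Fintype.sum_equiv (Φ x).right⁻¹ _ _ fun k => by
    rw [← Quot.sound (reidRel_mul_twisted Φ x (y ((Φ x).right⁻¹ k)) k)]

end Reidemeister

/-- The algebraic heart of the homotopy-invariance lemma for the trace formula:
given matrices for `∂` (entries `cd i l • d i l` with `d i l ∈ π`, `cd i l ∈ ℤ`)
and for the chain homotopies `H_k` (entries `ch k l i • h k l i`), the two
alternating twisted traces agree after applying the linearized quotient map `ρ`
to Reidemeister classes in `ℤ(π × {1,…,n}) → ℤR(Φ)`: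
`Σ_k ρ(tr(H_k ∘ ∂) × {k}) = Σ_k ρ(tr(∂ ∘ H_k) × {k})`, where
`tr(H_k ∘ ∂) = Σ_{i,l} φ_k(d^{il}) h^{li}_{σ_{d^{il}}⁻¹(k)}` and
`tr(∂ ∘ H_k) = Σ_{i,l} h_k^{li} d^{il}`. -/
theorem stmt12 (π : Type*) [Group π] (n : ℕ)
    (Φ : π →* (Fin n → π) ⋊[permAut π n] Equiv.Perm (Fin n))
    (I : Type*) [Fintype I]
    (d : I → I → π) (cd : I → I → ℤ)
    (h : Fin n → I → I → π) (ch : Fin n → I → I → ℤ) :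
    (∑ k : Fin n, ∑ i : I, ∑ l : I,
      (cd i l * ch ((Φ (d i l)).right⁻¹ k) l i) •
        Finsupp.single (Quot.mk (reidRel Φ)
          ((Φ (d i l)).left k * h ((Φ (d i l)).right⁻¹ k) l i, k)) (1 : ℤ)) =
    (∑ k : Fin n, ∑ i : I, ∑ l : I,
      (ch k l i * cd i l) •
        Finsupp.single (Quot.mk (reidRel Φ) (h k l i * d i l, k)) (1 : ℤ)) := by
  simp only [Finset.sum_comm (γ := Fin n), mul_comm (cd _ _)]
  exact Finset.sum_congr rfl fun i _ => Finset.sum_congr rfl fun l _ =>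
    sum_single_twisted_eq Φ (d i l) (fun k => h k l i) (fun k => ch k l i * cd i l)
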